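/- arXiv:2203.13514 — 5 statements merged into one kernel-verified Lean document; each statement's English description precedes it below -/
import Mathlib

section
/- Let n ≥ 2, let E be a real inner product space of dimension n, let x₀ ∈ E, and let f : E → ℝ be strongly differentiable at x₀ with gradient g. For affinely independent points a₁, …, a_{n+1} ∈ E, for 1 ≤ i ≤ n−1 let āᵢ be the reflection of aᵢ across the affine span of the points a_{i+1}, …, a_{n+1}, and set r̄ = Σ_{i=1}^{n−1} ((f(āᵢ) − f(aᵢ))/‖āᵢ − aᵢ‖²) • (āᵢ − aᵢ) + ((f(a_{n+1}) − f(aₙ))/‖a_{n+1} − aₙ‖²) • (a_{n+1} − aₙ). Then for every ε > 0 there exists δ > 0 such that whenever a₁, …, a_{n+1} are affinely independent and ‖aᵢ − x₀‖ < δ for all i, one has ‖r̄ − g‖ < ε; in other words, r̄ tends to g as the non-degenerate simplex with vertices a₁, …, a_{n+1} contracts to x₀. -/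
open EuclideanGeometry
open scoped InnerProductSpace

/-- Orthogonal reflection of the point `p` across the affine span of the set `s`
(Mathlib's `EuclideanGeometry.reflection`), extended by the identity if `s` is empty. -/
noncomputable def mirror {E : Type*} [NormedAddCommGroup E] [InnerProductSpace ℝ E]
    [FiniteDimensional ℝ E] (s : Set E) (p : E) : E :=
  open scoped Classical in
  if hs : s.Nonempty then
    haveI : Nonempty (affineSpan ℝ s) := ((affineSpan_nonempty ℝ (s := s)).mpr hs).to_subtype
    EuclideanGeometry.reflection (affineSpan ℝ s) p
  else p

/-- Given points `a 0, …, a n` (the paper's `a₁, …, a_{n+1}`), `mirrored n a i` (for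
`i : Fin (n-1)`, the paper's index `i+1 ∈ {1, …, n−1}`) is the reflection of the point `a i`
across the affine span of the points `a j`, `j > i`. -/
noncomputable def mirrored {E : Type*} [NormedAddCommGroup E] [InnerProductSpace ℝ E]
    [FiniteDimensional ℝ E] (n : ℕ) (a : Fin (n + 1) → E) (i : Fin (n - 1)) : E :=
  mirror (a '' {j | Fin.castLE (by omega) i < j}) (a (Fin.castLE (by omega) i))

/-- The mean multi-difference quotient vector
`r̄ = Σ_{i=1}^{n−1} ((f āᵢ − f aᵢ)/‖āᵢ − aᵢ‖²) • (āᵢ − aᵢ)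
    + ((f a_{n+1} − f aₙ)/‖a_{n+1} − aₙ‖²) • (a_{n+1} − aₙ)` (0-based indexing). -/
noncomputable def meanRatio {E : Type*} [NormedAddCommGroup E] [InnerProductSpace ℝ E]
    [FiniteDimensional ℝ E] (n : ℕ) (f : E → ℝ) (a : Fin (n + 1) → E) : E :=
  (∑ i : Fin (n - 1),
      ((f (mirrored n a i) - f (a (Fin.castLE (by omega) i))) /
          ‖mirrored n a i - a (Fin.castLE (by omega) i)‖ ^ 2) •
        (mirrored n a i - a (Fin.castLE (by omega) i))) +
    ((f (a (Fin.last n)) - f (a ⟨n - 1, by omega⟩)) /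
        ‖a (Fin.last n) - a ⟨n - 1, by omega⟩‖ ^ 2) •
      (a (Fin.last n) - a ⟨n - 1, by omega⟩)


/-!
The secant directions `vᵢ = āᵢ - aᵢ` (and `a_{n+1} - aₙ` for the last one) are pairwise
orthogonal: `vᵢ` is normal to the affine span of `a_{i+1}, …, a_{n+1}`, which contains every later
secant. Affine independence makes them nonzero, so they form an orthogonal basis of `E` and
`g = Σ ⟪vᵢ, g⟫ / ‖vᵢ‖² • vᵢ`. Hence `r̄ - g = Σ (f(āᵢ) - f(aᵢ) - ⟪g, vᵢ⟫) / ‖vᵢ‖² • vᵢ`, whose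
`i`-th term has norm `|f(āᵢ) - f(aᵢ) - ⟪g, vᵢ⟫| / ‖vᵢ‖`, small by strict differentiability: the
reflected points stay close to `x₀` because reflection preserves the distance to `a_{n+1}`.
-/

section OrthogonalExpansion

variable {E : Type*} [NormedAddCommGroup E] [InnerProductSpace ℝ E]

lemma norm_div_norm_sq_smul (t : ℝ) (v : E) : ‖(t / ‖v‖ ^ 2) • v‖ = |t| / ‖v‖ := by
  rcases eq_or_ne v 0 with rfl | hv
  · simp
  · have : ‖v‖ ≠ 0 := norm_ne_zero_iff.2 hv
    rw [norm_smul, norm_div, norm_pow, norm_norm, Real.norm_eq_abs]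
    field_simp

lemma sum_inner_div_norm_sq_smul_eq [FiniteDimensional ℝ E] {ι : Type*} [Fintype ι]
    {v : ι → E} (hv : ∀ i, v i ≠ 0) (horth : Pairwise fun i j => ⟪v i, v j⟫_ℝ = 0)
    (hcard : Fintype.card ι = Module.finrank ℝ E) (x : E) :
    ∑ i, (⟪v i, x⟫_ℝ / ‖v i‖ ^ 2) • v i = x := by
  have hspan : Submodule.span ℝ (Set.range v) = ⊤ :=
    (linearIndependent_of_ne_zero_of_inner_eq_zero hv horth).span_eq_top_of_card_eq_finrank' hcard
  have hinner : ∀ j, ⟪v j, ∑ i, (⟪v i, x⟫_ℝ / ‖v i‖ ^ 2) • v i - x⟫_ℝ = 0 := by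
    intro j
    have hj : ‖v j‖ ≠ 0 := norm_ne_zero_iff.2 (hv j)
    rw [inner_sub_right, inner_sum, Finset.sum_eq_single j
      (fun i _ hij => by rw [real_inner_smul_right, horth hij.symm, mul_zero]) (by simp),
      real_inner_smul_right, real_inner_self_eq_norm_sq]
    field_simp
    ring
  have hortho : ⊤ ⟂ (ℝ ∙ (∑ i, (⟪v i, x⟫_ℝ / ‖v i‖ ^ 2) • v i - x)) := by
    rw [← hspan, Submodule.isOrtho_span]
    rintro _ ⟨j, rfl⟩ _ rfl
    exact hinner j
  rwa [Submodule.isOrtho_top_left, Submodule.span_singleton_eq_bot, sub_eq_zero] at hortho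

lemma norm_sum_div_norm_sq_smul_sub_le [FiniteDimensional ℝ E] {ι : Type*} [Fintype ι]
    {v : ι → E} (hv : ∀ i, v i ≠ 0) (horth : Pairwise fun i j => ⟪v i, v j⟫_ℝ = 0)
    (hcard : Fintype.card ι = Module.finrank ℝ E) {c : ι → ℝ} {g : E} {ε : ℝ}
    (hc : ∀ i, |c i - ⟪g, v i⟫_ℝ| ≤ ε * ‖v i‖) :
    ‖∑ i, (c i / ‖v i‖ ^ 2) • v i - g‖ ≤ Fintype.card ι * ε := by
  calc ‖∑ i, (c i / ‖v i‖ ^ 2) • v i - g‖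
      = ‖∑ i, ((c i - ⟪g, v i⟫_ℝ) / ‖v i‖ ^ 2) • v i‖ := by
        conv_lhs => rw [← sum_inner_div_norm_sq_smul_eq hv horth hcard g]
        simp only [← Finset.sum_sub_distrib, ← sub_smul, sub_div, real_inner_comm]
    _ ≤ ∑ i, |c i - ⟪g, v i⟫_ℝ| / ‖v i‖ :=
        (norm_sum_le _ _).trans_eq (Finset.sum_congr rfl fun i _ => norm_div_norm_sq_smul _ _)
    _ ≤ ∑ _i : ι, ε :=
        Finset.sum_le_sum fun i _ => (div_le_iff₀ (norm_pos_iff.2 (hv i))).2 (hc i)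
    _ = Fintype.card ι * ε := by simp

end OrthogonalExpansion

namespace EuclideanGeometry

variable {V P : Type*} [NormedAddCommGroup V] [InnerProductSpace ℝ V] [MetricSpace P]
  [NormedAddTorsor V P] {s : AffineSubspace ℝ P} [Nonempty s] [s.direction.HasOrthogonalProjection]

lemma reflection_vsub_self_mem_direction_orthogonal (p : P) :
    reflection s p -ᵥ p ∈ s.directionᗮ := by
  have h : (orthogonalProjection s p : P) -ᵥ p ∈ s.directionᗮ := by
    rw [← neg_vsub_eq_vsub_rev]
    exact neg_mem (vsub_orthogonalProjection_mem_direction_orthogonal s p)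
  rw [reflection_apply', vadd_vsub_assoc]
  exact add_mem h h

lemma dist_reflection_le {q : P} (hq : q ∈ s) (p x : P) :
    dist (reflection s p) x ≤ dist p q + dist q x :=
  calc dist (reflection s p) x ≤ dist q (reflection s p) + dist q x := dist_triangle_left _ _ _
    _ = dist p q + dist q x := by rw [dist_reflection_eq_of_mem s hq, dist_comm]

end EuclideanGeometry

section Simplex

variable {E : Type*} [NormedAddCommGroup E] [InnerProductSpace ℝ E] {m : ℕ} (a : Fin (m + 2) → E)

noncomputable def tailSpan (i : Fin (m + 1)) : AffineSubspace ℝ E :=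
  affineSpan ℝ (a '' Set.Ioi i.castSucc)

lemma last_mem_tailSpan (i : Fin (m + 1)) : a (Fin.last (m + 1)) ∈ tailSpan a i :=
  mem_affineSpan ℝ ⟨_, Fin.castSucc_lt_last i, rfl⟩

instance (i : Fin (m + 1)) : Nonempty (tailSpan a i) := ⟨⟨_, last_mem_tailSpan a i⟩⟩

variable [FiniteDimensional ℝ E]

lemma mirrored_eq_reflection (i : Fin m) :
    mirrored (m + 1) a i = reflection (tailSpan a i.castSucc) (a i.castSucc.castSucc) := by
  rw [mirrored, mirror, dif_pos ⟨_, _, Fin.castSucc_lt_last i.castSucc, rfl⟩]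
  rfl

/-- The paper's `āᵢ` for `i < n - 1` and `a_{n+1}` for `i = n - 1`. -/
noncomputable def secantEnd : Fin (m + 1) → E :=
  Fin.lastCases (a (Fin.last (m + 1))) fun i =>
    reflection (tailSpan a i.castSucc) (a i.castSucc.castSucc)

noncomputable def secantDir (i : Fin (m + 1)) : E := secantEnd a i - a i.castSucc

lemma meanRatio_eq_sum (f : E → ℝ) :
    meanRatio (m + 1) f a = ∑ i, ((f (secantEnd a i) - f (a i.castSucc)) / ‖secantDir a i‖ ^ 2) •
      secantDir a i := by
  rw [Fin.sum_univ_castSucc, meanRatio]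
  simp only [secantDir, secantEnd, Fin.lastCases_castSucc, Fin.lastCases_last,
    ← mirrored_eq_reflection]
  rfl

lemma secantEnd_mem_affineSpan (i : Fin (m + 1)) :
    secantEnd a i ∈ affineSpan ℝ (a '' Set.Ici i.castSucc) := by
  induction i using Fin.lastCases with
  | last =>
    rw [secantEnd, Fin.lastCases_last]
    exact mem_affineSpan ℝ ⟨_, Fin.le_last _, rfl⟩
  | cast i =>
    rw [secantEnd, Fin.lastCases_castSucc]
    exact reflection_mem_of_le_of_mem (s₁ := tailSpan a i.castSucc)
      (affineSpan_mono ℝ (Set.image_mono Set.Ioi_subset_Ici_self))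
      (mem_affineSpan ℝ ⟨_, Set.mem_Ici.2 le_rfl, rfl⟩)

lemma secantDir_mem_direction (i : Fin (m + 1)) :
    secantDir a i ∈ (affineSpan ℝ (a '' Set.Ici i.castSucc)).direction :=
  AffineSubspace.vsub_mem_direction (secantEnd_mem_affineSpan a i)
    (mem_affineSpan ℝ ⟨_, Set.mem_Ici.2 le_rfl, rfl⟩)

lemma secantDir_castSucc_mem_direction_orthogonal (i : Fin m) :
    secantDir a i.castSucc ∈ (tailSpan a i.castSucc).directionᗮ := by
  rw [secantDir, secantEnd, Fin.lastCases_castSucc]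
  exact reflection_vsub_self_mem_direction_orthogonal _

lemma inner_secantDir_eq_zero {i j : Fin (m + 1)} (hij : i < j) :
    ⟪secantDir a i, secantDir a j⟫_ℝ = 0 := by
  obtain ⟨i, rfl⟩ := Fin.exists_castSucc_eq.2 (Fin.ne_last_of_lt hij)
  have hj : secantDir a j ∈ (tailSpan a i.castSucc).direction :=
    AffineSubspace.direction_le (affineSpan_mono ℝ (Set.image_mono fun k hk =>
      lt_of_lt_of_le (Fin.castSucc_lt_castSucc_iff.2 hij) hk)) (secantDir_mem_direction a j)
  exact Submodule.inner_left_of_mem_orthogonal hj (secantDir_castSucc_mem_direction_orthogonal a i)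

lemma pairwise_inner_secantDir_eq_zero :
    Pairwise fun i j => ⟪secantDir a i, secantDir a j⟫_ℝ = 0 := by
  intro i j hij
  rcases hij.lt_or_gt with h | h
  · exact inner_secantDir_eq_zero a h
  · rw [real_inner_comm]
    exact inner_secantDir_eq_zero a h

variable {a}

lemma secantDir_ne_zero (ha : AffineIndependent ℝ a) (i : Fin (m + 1)) : secantDir a i ≠ 0 := by
  rw [secantDir, sub_ne_zero]
  induction i using Fin.lastCases with
  | last =>
    rw [secantEnd, Fin.lastCases_last]
    exact fun h => (Fin.castSucc_lt_last _).ne' (ha.injective h)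
  | cast i =>
    rw [secantEnd, Fin.lastCases_castSucc, Ne, reflection_eq_self_iff]
    simpa [tailSpan] using
      ha.notMem_affineSpan_sdiff i.castSucc.castSucc (Set.Ioi i.castSucc.castSucc)

lemma secantEnd_mem_ball {x₀ : E} {r : ℝ} (ha : ∀ k, a k ∈ Metric.ball x₀ r) (i : Fin (m + 1)) :
    secantEnd a i ∈ Metric.ball x₀ (3 * r) := by
  have hr : 0 < r := Metric.pos_of_mem_ball (ha 0)
  induction i using Fin.lastCases with
  | last =>
    rw [secantEnd, Fin.lastCases_last]
    exact Metric.ball_subset_ball (by linarith) (ha _)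
  | cast i =>
    rw [secantEnd, Fin.lastCases_castSucc, Metric.mem_ball]
    have h₁ := dist_reflection_le (last_mem_tailSpan a i.castSucc) (a i.castSucc.castSucc) x₀
    have h₂ := dist_triangle_right (a i.castSucc.castSucc) (a (Fin.last (m + 1))) x₀
    have h₃ := Metric.mem_ball.1 (ha i.castSucc.castSucc)
    have h₄ := Metric.mem_ball.1 (ha (Fin.last (m + 1)))
    linarith

end Simplex

theorem mean_secant_hyperplane_tendsto_gradient_general
    {E : Type*} [NormedAddCommGroup E] [InnerProductSpace ℝ E] [FiniteDimensional ℝ E]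
    (n : ℕ) (hdim : Module.finrank ℝ E = n) (x₀ : E) (f : E → ℝ) (g : E)
    (hf : ∀ ε > (0 : ℝ), ∃ δ > (0 : ℝ), ∀ u v : E,
      ‖u - x₀‖ < δ → ‖v - x₀‖ < δ → |f u - f v - ⟪g, u - v⟫_ℝ| ≤ ε * ‖u - v‖) :
    ∀ ε > (0 : ℝ), ∃ δ > (0 : ℝ), ∀ a : Fin (n + 1) → E,
      AffineIndependent ℝ a → (∀ i, ‖a i - x₀‖ < δ) →
      ‖meanRatio n f a - g‖ < ε := by
  intro ε hε
  rcases n with _ | m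
  · have : Subsingleton E := Module.finrank_zero_iff.1 hdim
    exact ⟨1, one_pos, fun a _ _ => by simpa [Subsingleton.elim (meanRatio 0 f a - g) 0] using hε⟩
  obtain ⟨δ, hδ, hfδ⟩ := hf (ε / (m + 2)) (by positivity)
  refine ⟨δ / 3, by positivity, fun a ha hclose => ?_⟩
  have hball : ∀ k, a k ∈ Metric.ball x₀ (δ / 3) := fun k => mem_ball_iff_norm.2 (hclose k)
  have hsecant : ∀ i, |f (secantEnd a i) - f (a i.castSucc) - ⟪g, secantDir a i⟫_ℝ| ≤
      ε / (m + 2) * ‖secantDir a i‖ := fun i =>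
    hfδ _ _ (by simpa [mul_div_cancel₀] using mem_ball_iff_norm.1 (secantEnd_mem_ball hball i))
      (by linarith [hclose i.castSucc])
  rw [meanRatio_eq_sum]
  calc _ ≤ (m + 1 : ℕ) * (ε / (m + 2)) := by
        simpa using norm_sum_div_norm_sq_smul_sub_le (secantDir_ne_zero ha)
          (pairwise_inner_secantDir_eq_zero a) (by simp [hdim]) hsecant
    _ < ε := by
        rw [mul_div_assoc', div_lt_iff₀ (by positivity)]
        push_cast
        linarith

/-- If `f : E → ℝ` (with `dim E = n`, `n ≥ 2`) is strongly differentiable at `x₀` with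
gradient `g`, then the mean multi-difference quotient `r̄` built on a non-degenerate simplex
with vertices `a 0, …, a n` converges to `g` as the simplex contracts to `x₀`. -/
theorem mean_secant_hyperplane_tendsto_gradient
    {E : Type*} [NormedAddCommGroup E] [InnerProductSpace ℝ E] [FiniteDimensional ℝ E]
    (n : ℕ) (hn : 2 ≤ n) (hdim : Module.finrank ℝ E = n) (x₀ : E) (f : E → ℝ) (g : E)
    (hf : ∀ ε > (0 : ℝ), ∃ δ > (0 : ℝ), ∀ u v : E,
      ‖u - x₀‖ < δ → ‖v - x₀‖ < δ → |f u - f v - ⟪g, u - v⟫_ℝ| ≤ ε * ‖u - v‖) :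
    ∀ ε > (0 : ℝ), ∃ δ > (0 : ℝ), ∀ a : Fin (n + 1) → E,
      AffineIndependent ℝ a → (∀ i, ‖a i - x₀‖ < δ) →
      ‖meanRatio n f a - g‖ < ε :=
  mean_secant_hyperplane_tendsto_gradient_general n hdim x₀ f g hf
end

section
/- Let E be a finite-dimensional real inner product space, f : E → ℝ any function, and a, b, c ∈ E not collinear. Let ā be the reflection of a across the affine span of {b, c}, and set r̄ = ((f(ā) − f(a))/‖ā − a‖²) • (ā − a) + ((f(c) − f(b))/‖c − b‖²) • (c − b). Then in the Clifford algebra of the quadratic form Q(v) = ⟪v,v⟫ on E one has the identity (f(ā) − f(a)) • ι(c − b) − (f(c) − f(b)) • ι(ā − a) = ι(r̄) * ι(ā − a) * ι(c − b); i.e., the mean multi-difference vector equals the geometric product of r̄ with the pseudo-scalar (ā − a)(c − b), so r̄ is the Clifford quotient of the mean multi-difference vector by twice the oriented area bivector. -/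
open EuclideanGeometry CliffordAlgebra
open scoped InnerProductSpace

/-- The quadratic form `v ↦ ⟪v, v⟫` of a real inner product space. -/
noncomputable def Qf (E : Type*) [NormedAddCommGroup E] [InnerProductSpace ℝ E] :
    QuadraticForm ℝ E :=
  LinearMap.BilinMap.toQuadraticMap (innerₗ E)


/-!
The reflected point `ā` makes `ā − a` orthogonal to the line through `b` and `c`, so
`u = ā − a` and `v = c − b` anticommute in the Clifford algebra and square to `‖u‖²`, `‖v‖²`.
Hence `(α u + β v) u v = α ‖u‖² v − β ‖v‖² u`, and the coefficients of `r̄` are chosen exactly so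
that `α ‖u‖² = f ā − f a` and `β ‖v‖² = f c − f b`; both norms are nonzero since `a, b, c`
are not collinear.
-/

namespace CliffordAlgebra

variable {R M : Type*} [CommRing R] [AddCommGroup M] [Module R M] {Q : QuadraticForm R M}

theorem ι_smul_add_smul_mul_ι_mul_ι_of_isOrtho {u v : M} (h : Q.IsOrtho u v) (α β : R) :
    ι Q (α • u + β • v) * ι Q u * ι Q v = (α * Q u) • ι Q v - (β * Q v) • ι Q u := by
  rw [map_add, map_smul, map_smul, add_mul, add_mul, smul_mul_assoc, smul_mul_assoc,
    smul_mul_assoc, smul_mul_assoc, ι_sq_scalar, ι_mul_ι_comm_of_isOrtho h.symm, neg_mul,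
    mul_assoc, ι_sq_scalar, ← Algebra.commutes, ← Algebra.smul_def, ← Algebra.smul_def,
    smul_neg, smul_smul, smul_smul, sub_eq_add_neg]

end CliffordAlgebra

section Euclidean

variable {E : Type*} [NormedAddCommGroup E] [InnerProductSpace ℝ E]

theorem Qf_apply (u : E) : Qf E u = ‖u‖ ^ 2 := by
  simp [Qf]

theorem Qf_isOrtho_iff {u v : E} : (Qf E).IsOrtho u v ↔ ⟪u, v⟫_ℝ = 0 :=
  LinearMap.BilinForm.toQuadraticMap_isOrtho ⟨fun x y ↦ real_inner_comm y x⟩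

theorem EuclideanGeometry.reflection_vsub_self_mem_direction_orthogonal_s4
    {P : Type*} [MetricSpace P] [NormedAddTorsor E P] (s : AffineSubspace ℝ P) [Nonempty s]
    [s.direction.HasOrthogonalProjection] (p : P) :
    reflection s p -ᵥ p ∈ s.directionᗮ := by
  have hproj := orthogonalProjection_vsub_mem_direction_orthogonal s p
  rw [reflection_apply', vadd_vsub_assoc]
  exact Submodule.add_mem _ hproj hproj

variable [FiniteDimensional ℝ E]

theorem mirror_pair_eq_reflection (a b c : E) :
    mirror {b, c} a = reflection line[ℝ, b, c] a := by
  rw [mirror, dif_pos (Set.insert_nonempty b {c})]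

theorem inner_mirror_pair_sub_self_sub_eq_zero (a b c : E) :
    ⟪mirror {b, c} a - a, c - b⟫_ℝ = 0 := by
  rw [mirror_pair_eq_reflection]
  refine Submodule.inner_left_of_mem_orthogonal ?_
    (reflection_vsub_self_mem_direction_orthogonal_s4 line[ℝ, b, c] a)
  rw [direction_affineSpan]
  exact vsub_rev_mem_vectorSpan_pair ℝ b c

theorem mirror_pair_ne_self {a b c : E} (ha : a ∉ line[ℝ, b, c]) : mirror {b, c} a ≠ a := by
  rw [mirror_pair_eq_reflection, Ne, reflection_eq_self_iff]
  exact ha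

end Euclidean

/-- For non-collinear `a, b, c` in a finite-dimensional real inner product space, with
`ā` the reflection of `a` across the affine span of `{b, c}` and
`r̄ = ((f ā − f a)/‖ā − a‖²) • (ā − a) + ((f c − f b)/‖c − b‖²) • (c − b)`,
the mean multi-difference vector equals the geometric product of `r̄` with the pseudo-scalar
`(ā − a)(c − b)` in the Clifford algebra of `Q(v) = ⟪v, v⟫`. -/
theorem mean_multi_difference_eq_clifford_product_dim2
    {E : Type*} [NormedAddCommGroup E] [InnerProductSpace ℝ E] [FiniteDimensional ℝ E]
    (f : E → ℝ) (a b c : E) (h : ¬ Collinear ℝ ({a, b, c} : Set E)) :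
    (f (mirror {b, c} a) - f a) • ι (Qf E) (c - b) -
        (f c - f b) • ι (Qf E) (mirror {b, c} a - a) =
      ι (Qf E) (((f (mirror {b, c} a) - f a) / ‖mirror {b, c} a - a‖ ^ 2) •
            (mirror {b, c} a - a) +
          ((f c - f b) / ‖c - b‖ ^ 2) • (c - b)) *
        ι (Qf E) (mirror {b, c} a - a) * ι (Qf E) (c - b) := by
  have ha : a ∉ line[ℝ, b, c] := fun ha ↦
    h ((collinear_insert_iff_of_mem_affineSpan ha).2 (collinear_pair ℝ b c))
  have hu : ‖mirror {b, c} a - a‖ ^ 2 ≠ 0 := by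
    simpa [sub_eq_zero] using mirror_pair_ne_self ha
  have hv : ‖c - b‖ ^ 2 ≠ 0 := by
    simpa [sub_eq_zero] using (ne₂₃_of_not_collinear h).symm
  rw [ι_smul_add_smul_mul_ι_mul_ι_of_isOrtho
      (Qf_isOrtho_iff.2 (inner_mirror_pair_sub_self_sub_eq_zero a b c)),
    Qf_apply, Qf_apply, div_mul_cancel₀ _ hu, div_mul_cancel₀ _ hv]
end

section
/- Let E be a finite-dimensional real inner product space, f : E → ℝ any function, and a₁, a₂, a₃, a₄ ∈ E affinely independent. Let ā₁ be the reflection of a₁ across the affine span of {a₂, a₃, a₄}, let ā₂ be the reflection of a₂ across the affine span of {a₃, a₄}, and set r̄ = ((f(ā₁) − f(a₁))/‖ā₁ − a₁‖²) • (ā₁ − a₁) + ((f(ā₂) − f(a₂))/‖ā₂ − a₂‖²) • (ā₂ − a₂) + ((f(a₄) − f(a₃))/‖a₄ − a₃‖²) • (a₄ − a₃). Then in the Clifford algebra of the quadratic form Q(v) = ⟪v,v⟫ on E one has (f(ā₁) − f(a₁)) • ι(ā₂ − a₂) * ι(a₄ − a₃) − (f(ā₂) − f(a₂)) • ι(ā₁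 − a₁) * ι(a₄ − a₃) + (f(a₄) − f(a₃)) • ι(ā₁ − a₁) * ι(ā₂ − a₂) = ι(r̄) * ι(ā₁ − a₁) * ι(ā₂ − a₂) * ι(a₄ − a₃). -/
/-!
The vectors `ā₁ - a₁`, `ā₂ - a₂`, `a₄ - a₃` are pairwise orthogonal and nonzero: a reflection
moves a point orthogonally to the subspace it reflects across, and each later vector lies in the
direction of the earlier subspaces. Their images under `ι` therefore anticommute and square to
their squared norms, so multiplying `ι r̄` into the blade `ι(ā₁ - a₁) ι(ā₂ - a₂) ι(a₄ - a₃)`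
cancels each norm against the denominator of the corresponding coefficient of `r̄`.
-/

open EuclideanGeometry CliffordAlgebra
open scoped InnerProductSpace

namespace CliffordAlgebra

variable {R M : Type*} [CommRing R] [AddCommGroup M] [Module R M] {Q : QuadraticForm R M}

theorem ι_smul_add_smul_add_smul_mul_ι_mul_ι_mul_ι_of_isOrtho {u v w : M}
    (huv : Q.IsOrtho u v) (huw : Q.IsOrtho u w) (hvw : Q.IsOrtho v w) (a b c : R) :
    ι Q (a • u + b • v + c • w) * ι Q u * ι Q v * ι Q w =
      (a * Q u) • (ι Q v * ι Q w) - (b * Q v) • (ι Q u * ι Q w) + (c * Q w) • (ι Q u * ι Q v) := by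
  have hu : ι Q u * (ι Q u * (ι Q v * ι Q w)) = Q u • (ι Q v * ι Q w) := by
    rw [← mul_assoc, ι_sq_scalar, ← Algebra.smul_def]
  have hv : ι Q v * (ι Q u * (ι Q v * ι Q w)) = -(Q v • (ι Q u * ι Q w)) := by
    rw [ι_mul_ι_mul_of_isOrtho _ huv.symm, ← mul_assoc (ι Q v), ι_sq_scalar, ← Algebra.smul_def,
      mul_smul_comm]
  have hw : ι Q w * (ι Q u * (ι Q v * ι Q w)) = Q w • (ι Q u * ι Q v) := by
    rw [ι_mul_ι_mul_of_isOrtho _ huw.symm, ι_mul_ι_mul_of_isOrtho _ hvw.symm, mul_neg, neg_neg,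
      ι_sq_scalar, ← Algebra.commutes, ← Algebra.smul_def, mul_smul_comm]
  simp only [mul_assoc, map_add, map_smul, add_mul, smul_mul_assoc, hu, hv, hw, smul_neg,
    smul_smul]
  abel

theorem eq_ι_div_smul_add_mul_ι_mul_ι_mul_ι_of_isOrtho {K : Type*} [Field K] [Module K M]
    {Q : QuadraticForm K M} {u v w : M} (huv : Q.IsOrtho u v) (huw : Q.IsOrtho u w)
    (hvw : Q.IsOrtho v w) (hu : Q u ≠ 0) (hv : Q v ≠ 0) (hw : Q w ≠ 0) (a b c : K) :
    a • (ι Q v * ι Q w) - b • (ι Q u * ι Q w) + c • (ι Q u * ι Q v) =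
      ι Q ((a / Q u) • u + (b / Q v) • v + (c / Q w) • w) * ι Q u * ι Q v * ι Q w := by
  rw [ι_smul_add_smul_add_smul_mul_ι_mul_ι_mul_ι_of_isOrtho huv huw hvw, div_mul_cancel₀ _ hu,
    div_mul_cancel₀ _ hv, div_mul_cancel₀ _ hw]

end CliffordAlgebra

theorem EuclideanGeometry.reflection_vsub_mem_direction_orthogonal {𝕜 V P : Type*} [RCLike 𝕜]
    [NormedAddCommGroup V] [InnerProductSpace 𝕜 V] [MetricSpace P] [NormedAddTorsor V P]
    (s : AffineSubspace 𝕜 P) [Nonempty s] [s.direction.HasOrthogonalProjection] (p : P) :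
    reflection s p -ᵥ p ∈ s.directionᗮ := by
  rw [reflection_apply', vadd_vsub_assoc]
  exact add_mem (orthogonalProjection_vsub_mem_direction_orthogonal s p)
    (orthogonalProjection_vsub_mem_direction_orthogonal s p)

section mirror

variable {E : Type*} [NormedAddCommGroup E] [InnerProductSpace ℝ E] [FiniteDimensional ℝ E]
  {s t : Set E} {p : E}

theorem mirror_eq_reflection [Nonempty (affineSpan ℝ s)] :
    mirror s p = reflection (affineSpan ℝ s) p := by
  rw [mirror, dif_pos]
  obtain ⟨⟨q, hq⟩⟩ := ‹Nonempty (affineSpan ℝ s)›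
  exact (affineSpan_nonempty ℝ).mp ⟨q, hq⟩

theorem mirror_sub_mem_direction_orthogonal (hs : s.Nonempty) :
    mirror s p - p ∈ (affineSpan ℝ s).directionᗮ := by
  have : Nonempty (affineSpan ℝ s) := ((affineSpan_nonempty ℝ).mpr hs).to_subtype
  rw [mirror_eq_reflection]
  exact reflection_vsub_mem_direction_orthogonal _ p

theorem mirror_sub_ne_zero (hs : s.Nonempty) (hp : p ∉ affineSpan ℝ s) : mirror s p - p ≠ 0 := by
  have : Nonempty (affineSpan ℝ s) := ((affineSpan_nonempty ℝ).mpr hs).to_subtype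
  rw [mirror_eq_reflection, sub_ne_zero]
  exact mt (reflection_eq_self_iff p).mp hp

theorem mirror_sub_mem_direction_of_subset (ht : t.Nonempty) (hts : t ⊆ s)
    (hp : p ∈ affineSpan ℝ s) : mirror t p - p ∈ (affineSpan ℝ s).direction := by
  have : Nonempty (affineSpan ℝ t) := ((affineSpan_nonempty ℝ).mpr ht).to_subtype
  rw [mirror_eq_reflection]
  exact AffineSubspace.vsub_mem_direction
    (reflection_mem_of_le_of_mem (affineSpan_mono ℝ hts) hp) hp

end mirror

/-- For affinely independent `a₁, a₂, a₃, a₄` in a finite-dimensional real inner product space,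
with `ā₁` the reflection of `a₁` across the affine span of `{a₂, a₃, a₄}`, `ā₂` the reflection
of `a₂` across the affine span of `{a₃, a₄}`, and `r̄` the mean multi-difference quotient vector,
the mean multi-difference pseudo-vector equals the geometric product of `r̄` with the
pseudo-scalar `(ā₁ − a₁)(ā₂ − a₂)(a₄ − a₃)` in the Clifford algebra of `Q(v) = ⟪v, v⟫`. -/
theorem mean_multi_difference_eq_clifford_product_dim3
    {E : Type*} [NormedAddCommGroup E] [InnerProductSpace ℝ E] [FiniteDimensional ℝ E]
    (f : E → ℝ) (a₁ a₂ a₃ a₄ : E) (h : AffineIndependent ℝ ![a₁, a₂, a₃, a₄]) :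
    (f (mirror {a₂, a₃, a₄} a₁) - f a₁) •
          (ι (Qf E) (mirror {a₃, a₄} a₂ - a₂) * ι (Qf E) (a₄ - a₃)) -
        (f (mirror {a₃, a₄} a₂) - f a₂) •
          (ι (Qf E) (mirror {a₂, a₃, a₄} a₁ - a₁) * ι (Qf E) (a₄ - a₃)) +
        (f a₄ - f a₃) •
          (ι (Qf E) (mirror {a₂, a₃, a₄} a₁ - a₁) * ι (Qf E) (mirror {a₃, a₄} a₂ - a₂)) =
      ι (Qf E) (((f (mirror {a₂, a₃, a₄} a₁) - f a₁) / ‖mirror {a₂, a₃, a₄} a₁ - a₁‖ ^ 2) •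
            (mirror {a₂, a₃, a₄} a₁ - a₁) +
          ((f (mirror {a₃, a₄} a₂) - f a₂) / ‖mirror {a₃, a₄} a₂ - a₂‖ ^ 2) •
            (mirror {a₃, a₄} a₂ - a₂) +
          ((f a₄ - f a₃) / ‖a₄ - a₃‖ ^ 2) • (a₄ - a₃)) *
        ι (Qf E) (mirror {a₂, a₃, a₄} a₁ - a₁) *
        ι (Qf E) (mirror {a₃, a₄} a₂ - a₂) * ι (Qf E) (a₄ - a₃) := by
  have hne₁ : ({a₂, a₃, a₄} : Set E).Nonempty := Set.insert_nonempty _ _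
  have hne₂ : ({a₃, a₄} : Set E).Nonempty := Set.insert_nonempty _ _
  have ha₁ : a₁ ∉ affineSpan ℝ {a₂, a₃, a₄} := by
    simpa [Set.image_insert_eq] using h.notMem_affineSpan_sdiff 0 {1, 2, 3}
  have ha₂ : a₂ ∉ affineSpan ℝ {a₃, a₄} := by
    simpa [Set.image_insert_eq] using h.notMem_affineSpan_sdiff 1 {2, 3}
  have ha₃₄ : a₄ ≠ a₃ := h.injective.ne (by decide : (3 : Fin 4) ≠ 2)
  have hw₂ : a₄ - a₃ ∈ (affineSpan ℝ ({a₃, a₄} : Set E)).direction := by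
    rw [direction_affineSpan]; exact vsub_rev_mem_vectorSpan_pair ℝ a₃ a₄
  have hw₁ : a₄ - a₃ ∈ (affineSpan ℝ ({a₂, a₃, a₄} : Set E)).direction :=
    AffineSubspace.direction_le (affineSpan_mono ℝ (Set.subset_insert _ _)) hw₂
  have hv₁ := mirror_sub_mem_direction_of_subset (p := a₂) hne₂ (Set.subset_insert _ _)
    (mem_affineSpan ℝ (Set.mem_insert _ _))
  have hu := mirror_sub_mem_direction_orthogonal (p := a₁) hne₁
  have hv := mirror_sub_mem_direction_orthogonal (p := a₂) hne₂
  simpa only [Qf_apply] using eq_ι_div_smul_add_mul_ι_mul_ι_mul_ι_of_isOrtho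
    (Qf_isOrtho_iff.mpr (Submodule.inner_left_of_mem_orthogonal hv₁ hu))
    (Qf_isOrtho_iff.mpr (Submodule.inner_left_of_mem_orthogonal hw₁ hu))
    (Qf_isOrtho_iff.mpr (Submodule.inner_left_of_mem_orthogonal hw₂ hv))
    (by simpa [Qf_apply] using mirror_sub_ne_zero hne₁ ha₁)
    (by simpa [Qf_apply] using mirror_sub_ne_zero hne₂ ha₂)
    (by simpa [Qf_apply, sub_eq_zero] using ha₃₄) _ _ _
end

section
/- Let n ≥ 2, let E be a finite-dimensional real inner product space, f : E → ℝ any function, and a₁, …, a_{n+1} ∈ E affinely independent. For 1 ≤ i ≤ n−1 let āᵢ be the reflection of aᵢ across the affine span of a_{i+1}, …, a_{n+1}, and set r̄ = Σ_{i=1}^{n−1} ((f(āᵢ) − f(aᵢ))/‖āᵢ − aᵢ‖²) • (āᵢ − aᵢ) + ((f(a_{n+1}) − f(aₙ))/‖a_{n+1} − aₙ‖²) • (a_{n+1} − aₙ). In the Clifford algebra of the quadratic form Q(v) = ⟪v,v⟫ on E, let P = ι(ā₁ − a₁) * ⋯ * ι(ā_{n−1} − a_{n−1}) (ordered product), and for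 1 ≤ i ≤ n−1 let Pᵢ denote the ordered product over j ∈ {1,…,n−1}, j ≠ i, of the ι(āⱼ − aⱼ), multiplied on the right by ι(a_{n+1} − aₙ). Then Σ_{i=1}^{n−1} (−1)^{i+1} (f(āᵢ) − f(aᵢ)) • Pᵢ + (−1)^{n+1} (f(a_{n+1}) − f(aₙ)) • P = ι(r̄) * P * ι(a_{n+1} − aₙ). -/
open EuclideanGeometry CliffordAlgebra
open scoped InnerProductSpace

/-! Each āᵢ − aᵢ is normal to the affine span of a_{i+1}, …, a_{n+1}, and that span contains all
later points together with their reflections; so the vectors āᵢ − aᵢ and a_{n+1} − aₙ are pairwise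
orthogonal, and their images under ι anticommute. Multiplying P on the left by the i-th summand of
ι(r̄) therefore moves ι(āᵢ − aᵢ) to its own slot at the sign (−1)^(i+1) and squares it to
‖āᵢ − aᵢ‖², which cancels the denominator; the last summand is moved past all of P instead.
Affine independence makes all these vectors nonzero. -/

namespace CliffordAlgebra

section CommRing

variable {R M : Type*} [CommRing R] [AddCommGroup M] [Module R M] {Q : QuadraticForm R M}

theorem ι_mul_prod_ofFn_of_isOrtho {m : ℕ} (v : Fin m → M) {w : M}
    (h : ∀ j, Q.IsOrtho w (v j)) :
    ι Q w * (List.ofFn fun j => ι Q (v j)).prod =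
      (-1 : R) ^ m • ((List.ofFn fun j => ι Q (v j)).prod * ι Q w) := by
  induction m with
  | zero => simp
  | succ m ih =>
    rw [List.ofFn_succ, List.prod_cons, ι_mul_ι_mul_of_isOrtho _ (h 0),
      ih (fun j => v j.succ) fun j => h j.succ, pow_succ, mul_neg_one, neg_smul, mul_smul_comm,
      mul_assoc]

theorem ι_mul_prod_ofFn_of_isOrtho_of_ne {m : ℕ} (v : Fin m → M) (i : Fin m)
    (h : ∀ j, j ≠ i → Q.IsOrtho (v i) (v j)) :
    ι Q (v i) * (List.ofFn fun j => ι Q (v j)).prod =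
      ((-1 : R) ^ (i : ℕ) * Q (v i)) • ((List.ofFn fun j => ι Q (v j)).eraseIdx i).prod := by
  induction m with
  | zero => exact i.elim0
  | succ m ih =>
    rw [List.ofFn_succ, List.prod_cons]
    induction i using Fin.cases with
    | zero => simp [← mul_assoc, ι_sq_scalar, Algebra.smul_def]
    | succ i =>
      rw [ι_mul_ι_mul_of_isOrtho _ (h 0 (Fin.succ_ne_zero i).symm),
        ih (fun j => v j.succ) i fun j hj => h j.succ (by simpa using hj)]
      simp [pow_succ]

end CommRing

section Field

variable {K M : Type*} [Field K] [AddCommGroup M] [Module K M] {Q : QuadraticForm K M}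

theorem ι_add_sum_mul_prod_ofFn_mul_ι {m : ℕ} (v : Fin m → M) (w : M) (c : Fin m → K) (d : K)
    (hvv : ∀ i j, i ≠ j → Q.IsOrtho (v i) (v j)) (hvw : ∀ j, Q.IsOrtho w (v j))
    (hv : ∀ i, Q (v i) ≠ 0) (hw : Q w ≠ 0) :
    ι Q ((∑ i, (c i / Q (v i)) • v i) + (d / Q w) • w) *
        (List.ofFn fun j => ι Q (v j)).prod * ι Q w =
      (∑ i : Fin m, ((-1 : K) ^ (i : ℕ) * c i) •
          (((List.ofFn fun j => ι Q (v j)).eraseIdx i).prod * ι Q w)) +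
        ((-1 : K) ^ m * d) • (List.ofFn fun j => ι Q (v j)).prod := by
  rw [map_add, map_sum, add_mul, add_mul, Finset.sum_mul, Finset.sum_mul]
  congr 1
  · refine Finset.sum_congr rfl fun i _ => ?_
    rw [map_smul, smul_mul_assoc, smul_mul_assoc,
      ι_mul_prod_ofFn_of_isOrtho_of_ne v i fun j hj => hvv i j hj.symm, smul_mul_assoc, smul_smul]
    congr 1
    field_simp [hv i]
  · rw [map_smul, smul_mul_assoc, smul_mul_assoc, ι_mul_prod_ofFn_of_isOrtho v hvw,
      smul_mul_assoc, mul_assoc, ι_sq_scalar, Algebra.algebraMap_eq_smul_one, mul_smul_comm,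
      mul_one, smul_smul, smul_smul]
    congr 1
    field_simp [hw]

end Field

end CliffordAlgebra

section mirror
variable {E : Type*} [NormedAddCommGroup E] [InnerProductSpace ℝ E] [FiniteDimensional ℝ E]

theorem mirror_sub_self_mem_orthogonal (s : Set E) (p : E) :
    mirror s p - p ∈ (affineSpan ℝ s).directionᗮ := by
  unfold mirror
  split_ifs with hs
  · have : Nonempty (affineSpan ℝ s) := (hs.mono (subset_affineSpan ℝ s)).to_subtype
    rw [reflection_apply', ← vsub_eq_sub, vadd_vsub_assoc]
    exact add_mem (orthogonalProjection_vsub_mem_direction_orthogonal _ _)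
      (orthogonalProjection_vsub_mem_direction_orthogonal _ _)
  · simp

theorem mirror_mem_affineSpan {s t : Set E} (hts : t ⊆ s) {p : E} (hp : p ∈ affineSpan ℝ s) :
    mirror t p ∈ affineSpan ℝ s := by
  unfold mirror
  split_ifs with ht
  · have : Nonempty (affineSpan ℝ t) := (ht.mono (subset_affineSpan ℝ t)).to_subtype
    exact reflection_mem_of_le_of_mem (affineSpan_mono ℝ hts) hp
  · exact hp

theorem mirror_eq_self_iff {s : Set E} (hs : s.Nonempty) {p : E} :
    mirror s p = p ↔ p ∈ affineSpan ℝ s := by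
  have : Nonempty (affineSpan ℝ s) := (hs.mono (subset_affineSpan ℝ s)).to_subtype
  rw [mirror, dif_pos hs, reflection_eq_self_iff]

end mirror

section Qf
variable {E : Type*} [NormedAddCommGroup E] [InnerProductSpace ℝ E]

theorem Qf_eq_zero_iff {u : E} : Qf E u = 0 ↔ u = 0 := by
  simp [Qf_apply]

end Qf

section mirrored
variable {E : Type*} [NormedAddCommGroup E] [InnerProductSpace ℝ E] [FiniteDimensional ℝ E]
  {n : ℕ} (a : Fin (n + 1) → E)

theorem mirrored_sub_mem_direction {i j : Fin (n - 1)} (hij : i < j) :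
    mirrored n a j - a (Fin.castLE (by omega) j) ∈
      (affineSpan ℝ (a '' {k | Fin.castLE (by omega) i < k})).direction := by
  have hij' : Fin.castLE (by omega) i < (Fin.castLE (by omega) j : Fin (n + 1)) := hij
  have hmem : a (Fin.castLE (by omega) j) ∈
      affineSpan ℝ (a '' {k | Fin.castLE (by omega) i < k}) :=
    mem_affineSpan ℝ ⟨_, hij', rfl⟩
  rw [← vsub_eq_sub]
  exact AffineSubspace.vsub_mem_direction
    (mirror_mem_affineSpan (Set.image_mono fun k hk => hij'.trans hk) hmem) hmem

theorem inner_mirrored_sub_mirrored_sub {i j : Fin (n - 1)} (hij : i ≠ j) :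
    ⟪mirrored n a i - a (Fin.castLE (by omega) i),
      mirrored n a j - a (Fin.castLE (by omega) j)⟫_ℝ = 0 := by
  wlog hlt : i < j generalizing i j
  · rw [real_inner_comm]
    exact this hij.symm (lt_of_le_of_ne (not_lt.mp hlt) hij.symm)
  exact Submodule.inner_left_of_mem_orthogonal (mirrored_sub_mem_direction a hlt)
    (mirror_sub_self_mem_orthogonal _ _)

theorem inner_mirrored_sub_last_sub (i : Fin (n - 1)) :
    ⟪mirrored n a i - a (Fin.castLE (by omega) i),
      a (Fin.last n) - a ⟨n - 1, by omega⟩⟫_ℝ = 0 := by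
  have hmem : ∀ k : Fin (n + 1), n - 1 ≤ k →
      a k ∈ affineSpan ℝ (a '' {j | Fin.castLE (by omega) i < j}) := fun k hk =>
    mem_affineSpan ℝ ⟨k, by simp only [Set.mem_ofPred_eq, Fin.lt_def, Fin.val_castLE]; omega, rfl⟩
  rw [← vsub_eq_sub (a (Fin.last n))]
  exact Submodule.inner_left_of_mem_orthogonal
    (AffineSubspace.vsub_mem_direction (hmem _ (by simp)) (hmem _ le_rfl))
    (mirror_sub_self_mem_orthogonal _ _)

theorem mirrored_ne (ha : AffineIndependent ℝ a) (i : Fin (n - 1)) :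
    mirrored n a i ≠ a (Fin.castLE (by omega) i) := by
  have hne : (a '' {k | Fin.castLE (by omega) i < k}).Nonempty :=
    ⟨_, Fin.last n, by
      simp only [Set.mem_ofPred_eq, Fin.lt_def, Fin.val_castLE, Fin.val_last]; omega, rfl⟩
  rw [mirrored, Ne, mirror_eq_self_iff hne, ha.mem_affineSpan_iff]
  simp

end mirrored

/-- The mean multi-difference pseudo-vector (times `2^{n−1}`) equals the geometric product of
the mean multi-difference quotient vector `r̄` with the pseudo-scalar
`(ā₁ − a₁) ⋯ (ā_{n−1} − a_{n−1})(a_{n+1} − aₙ)` in the Clifford algebra of `Q(v) = ⟪v, v⟫`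
(`P` is the ordered product of the `ι (āⱼ − aⱼ)`, and `Pᵢ` omits the `i`-th factor and is
multiplied on the right by `ι (a_{n+1} − aₙ)`; indexing is 0-based). -/
theorem mean_multi_difference_eq_clifford_product
    {E : Type*} [NormedAddCommGroup E] [InnerProductSpace ℝ E] [FiniteDimensional ℝ E]
    (n : ℕ) (hn : 2 ≤ n) (f : E → ℝ) (a : Fin (n + 1) → E) (ha : AffineIndependent ℝ a) :
    let v : Fin (n - 1) → E := fun i => mirrored n a i - a (Fin.castLE (by omega) i)
    let w : E := a (Fin.last n) - a ⟨n - 1, by omega⟩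
    let P : CliffordAlgebra (Qf E) := (List.ofFn fun j : Fin (n - 1) => ι (Qf E) (v j)).prod
    let Pp : Fin (n - 1) → CliffordAlgebra (Qf E) := fun i =>
      ((List.ofFn fun j : Fin (n - 1) => ι (Qf E) (v j)).eraseIdx (i : ℕ)).prod * ι (Qf E) w
    let rbar : E := (∑ i : Fin (n - 1),
        ((f (mirrored n a i) - f (a (Fin.castLE (by omega) i))) / ‖v i‖ ^ 2) • v i) +
      ((f (a (Fin.last n)) - f (a ⟨n - 1, by omega⟩)) / ‖w‖ ^ 2) • w
    (∑ i : Fin (n - 1),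
        ((-1 : ℝ) ^ (i : ℕ) * (f (mirrored n a i) - f (a (Fin.castLE (by omega) i)))) • Pp i) +
      ((-1 : ℝ) ^ (n + 1) * (f (a (Fin.last n)) - f (a ⟨n - 1, by omega⟩))) • P =
      ι (Qf E) rbar * P * ι (Qf E) w := by
  intro v w P Pp rbar
  have hv : ∀ i, Qf E (v i) ≠ 0 := fun i =>
    Qf_eq_zero_iff.not.mpr (sub_ne_zero.mpr (mirrored_ne a ha i))
  have hw : Qf E w ≠ 0 :=
    Qf_eq_zero_iff.not.mpr (sub_ne_zero.mpr (ha.injective.ne (by simp [Fin.ext_iff]; omega)))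
  have hclifford := ι_add_sum_mul_prod_ofFn_mul_ι v w
    (fun i => f (mirrored n a i) - f (a (Fin.castLE (by omega) i)))
    (f (a (Fin.last n)) - f (a ⟨n - 1, by omega⟩))
    (fun i j hij => Qf_isOrtho_iff.mpr (inner_mirrored_sub_mirrored_sub a hij))
    (fun j => Qf_isOrtho_iff.mpr (by rw [real_inner_comm]; exact inner_mirrored_sub_last_sub a j))
    hv hw
  simp only [Qf_apply] at hclifford
  have hsign : (-1 : ℝ) ^ (n + 1) = (-1) ^ (n - 1) := by
    rw [show n + 1 = n - 1 + 2 by omega, pow_add, neg_one_sq, mul_one]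
  rw [hsign]
  exact hclifford.symm
end

section
/- Let n ≥ 2, let E be a finite-dimensional real inner product space, and let a₁, …, a_{n+1} ∈ E be affinely independent. For 1 ≤ i ≤ n−1 let āᵢ be the reflection of aᵢ across the affine span of a_{i+1}, …, a_{n+1}. Define vectors v₁, …, vₙ by vᵢ = āᵢ − aᵢ for 1 ≤ i ≤ n−1 and vₙ = a_{n+1} − aₙ. Then each vᵢ is nonzero and the vectors v₁, …, vₙ are pairwise orthogonal: ⟪vᵢ, vⱼ⟫ = 0 whenever i ≠ j. -/
open EuclideanGeometry
open scoped InnerProductSpace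

/-!
Each `vᵢ = āᵢ - aᵢ` is twice the vector from `aᵢ` to its orthogonal projection onto the span of
the later points, so it is orthogonal to that span. Every later `vⱼ` is a difference of two points
of that span, hence `⟪vᵢ, vⱼ⟫ = 0`; and `vᵢ ≠ 0` because affine independence keeps `aᵢ` off the
span of the later points.
-/

section Mirror

variable {E : Type*} [NormedAddCommGroup E] [InnerProductSpace ℝ E] [FiniteDimensional ℝ E]
  {s : Set E} {p : E}

theorem mirror_sub_self_mem_direction_orthogonal :
    mirror s p - p ∈ (affineSpan ℝ s).directionᗮ := by
  unfold mirror
  split_ifs with hs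
  · have : Nonempty s := hs.to_subtype
    have hproj := orthogonalProjection_vsub_mem_direction_orthogonal (affineSpan ℝ s) p
    rw [← vsub_eq_sub, reflection_apply', vadd_vsub_assoc]
    exact add_mem hproj hproj
  · simp

theorem mirror_mem_of_le {Q : AffineSubspace ℝ E} (hle : affineSpan ℝ s ≤ Q) (hp : p ∈ Q) :
    mirror s p ∈ Q := by
  unfold mirror
  split_ifs with hs
  · have : Nonempty s := hs.to_subtype
    exact reflection_mem_of_le_of_mem hle hp
  · exact hp

theorem mirror_ne_self (hs : s.Nonempty) (hp : p ∉ affineSpan ℝ s) : mirror s p ≠ p := by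
  have : Nonempty s := hs.to_subtype
  rw [mirror, dif_pos hs]
  exact fun h => hp ((reflection_eq_self_iff p).mp h)

end Mirror

section MirroredVector

variable {E : Type*} [NormedAddCommGroup E] [InnerProductSpace ℝ E] [FiniteDimensional ℝ E]
  {n : ℕ} {a : Fin (n + 1) → E}

/-- The vectors `v` of the main theorem, spelled so as to agree with them definitionally. -/
noncomputable def mirroredVector (n : ℕ) (a : Fin (n + 1) → E) (i : Fin n) : E :=
  if h : (i : ℕ) < n - 1 then
    mirrored n a ⟨(i : ℕ), h⟩ - a i.castSucc
  else a (Fin.last n) - a ⟨n - 1, Nat.sub_lt_succ n 1⟩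

theorem mirroredVector_of_lt {i : Fin n} (h : (i : ℕ) < n - 1) :
    mirroredVector n a i = mirror (a '' Set.Ioi i.castSucc) (a i.castSucc) - a i.castSucc :=
  dif_pos h

theorem mirroredVector_of_not_lt {i : Fin n} (h : ¬(i : ℕ) < n - 1) :
    mirroredVector n a i = a (Fin.last n) - a i.castSucc := by
  rw [mirroredVector, dif_neg h, Fin.castSucc, Fin.castAdd, Fin.castLE]
  congr
  omega

theorem mirroredVector_mem_direction (i : Fin n) :
    mirroredVector n a i ∈ (affineSpan ℝ (a '' Set.Ici i.castSucc)).direction := by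
  have hmem : ∀ k, i.castSucc ≤ k → a k ∈ affineSpan ℝ (a '' Set.Ici i.castSucc) :=
    fun k hk => subset_affineSpan ℝ _ (Set.mem_image_of_mem a hk)
  have hai := hmem _ le_rfl
  by_cases h : (i : ℕ) < n - 1
  · rw [mirroredVector_of_lt h, ← vsub_eq_sub]
    have hle : affineSpan ℝ (a '' Set.Ioi i.castSucc) ≤ affineSpan ℝ (a '' Set.Ici i.castSucc) :=
      affineSpan_mono ℝ (Set.image_mono Set.Ioi_subset_Ici_self)
    exact AffineSubspace.vsub_mem_direction (mirror_mem_of_le hle hai) hai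
  · rw [mirroredVector_of_not_lt h, ← vsub_eq_sub]
    exact AffineSubspace.vsub_mem_direction (hmem _ (Fin.castSucc_lt_last i).le) hai

theorem mirroredVector_mem_direction_orthogonal {i : Fin n} (h : (i : ℕ) < n - 1) :
    mirroredVector n a i ∈ (affineSpan ℝ (a '' Set.Ioi i.castSucc)).directionᗮ := by
  rw [mirroredVector_of_lt h]
  exact mirror_sub_self_mem_direction_orthogonal

theorem inner_mirroredVector_eq_zero_of_lt {i j : Fin n} (hij : i < j) :
    ⟪mirroredVector n a i, mirroredVector n a j⟫_ℝ = 0 := by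
  have hi : (i : ℕ) < n - 1 := by omega
  have hle : affineSpan ℝ (a '' Set.Ici j.castSucc) ≤ affineSpan ℝ (a '' Set.Ioi i.castSucc) :=
    affineSpan_mono ℝ <| Set.image_mono <|
      Set.Ici_subset_Ioi.mpr (Fin.castSucc_lt_castSucc_iff.mpr hij)
  exact Submodule.inner_left_of_mem_orthogonal
    (AffineSubspace.direction_le hle (mirroredVector_mem_direction j))
    (mirroredVector_mem_direction_orthogonal hi)

theorem mirroredVector_ne_zero (ha : AffineIndependent ℝ a) (i : Fin n) :
    mirroredVector n a i ≠ 0 := by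
  by_cases h : (i : ℕ) < n - 1
  · rw [mirroredVector_of_lt h, sub_ne_zero]
    refine mirror_ne_self ⟨_, Set.mem_image_of_mem a (Fin.castSucc_lt_last i)⟩ ?_
    simp [ha.mem_affineSpan_iff]
  · rw [mirroredVector_of_not_lt h, sub_ne_zero]
    exact ha.injective.ne (Fin.castSucc_lt_last i).ne'

end MirroredVector

/-- For affinely independent points `a 0, …, a n` (`n ≥ 2`) in a finite-dimensional real inner
product space, the vectors `v i = āᵢ − aᵢ` (`1 ≤ i ≤ n−1`) and `v n = a_{n+1} − aₙ` are
nonzero and pairwise orthogonal (0-based indexing). -/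
theorem mirrored_vectors_nonzero_and_pairwise_orthogonal
    {E : Type*} [NormedAddCommGroup E] [InnerProductSpace ℝ E] [FiniteDimensional ℝ E]
    (n : ℕ) (a : Fin (n + 1) → E) (ha : AffineIndependent ℝ a) :
    let v : Fin n → E := fun i =>
      if h : (i : ℕ) < n - 1 then
        mirrored n a ⟨(i : ℕ), h⟩ - a (Fin.castLE (by omega) i)
      else a (Fin.last n) - a ⟨n - 1, by omega⟩
    (∀ i, v i ≠ 0) ∧ ∀ i j, i ≠ j → ⟪v i, v j⟫_ℝ = 0 := by
  intro v
  refine ⟨mirroredVector_ne_zero ha, fun i j hij => ?_⟩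
  rcases hij.lt_or_gt with h | h
  · exact inner_mirroredVector_eq_zero_of_lt h
  · rw [real_inner_comm]
    exact inner_mirroredVector_eq_zero_of_lt h
end
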